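/- arXiv:math/0303243 — 2 statements merged into one kernel-verified Lean document; each statement's English description precedes it below -/
import Mathlib

section
/- Let x, y, z be three pairwise distinct points in the complex plane and let x' be a point with C⁻¹|x-y| ≤ |x'-y| ≤ C|x-y| for some constant C ≥ 1. Then |c(x,y,z) − c(x',y,z)| ≤ (4 + 2C)·|x−x'|/(|x−y|·|x−z|), where c(p,q,r) denotes the Menger curvature, i.e. the reciprocal of the radius of the circle through p, q, r (equal to 2·dist(p, line(q,r))/(|p−q|·|p−r|)). -/
/-!
Write `c(x,y,z) = 2d/(AB)` with `d` the distance from `x` to the line through `y, z` and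
`A = |x-y|`, `B = |x-z|`; primes denote the same quantities for `x'`. All three are 1-Lipschitz
in `x`. Changing `d`, then `A`, then `B` one at a time, the three differences are at most
`2|x-x'|/(AB)`, `2(d'/A')|x-x'|/(AB)` and `2(d'/B')|x-x'|/(A'B)`; since the line passes through
`y` and `z`, `d' ≤ min(A', B')`, and `A ≤ C A'` turns the last bound into `2C|x-x'|/(AB)`.
-/

noncomputable def mengerCurv (p q r : ℂ) : ℝ :=
  2 * Metric.infDist p ((affineSpan ℝ ({q, r} : Set ℂ) : AffineSubspace ℝ ℂ) : Set ℂ) /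
    (dist p q * dist p r)

lemma abs_two_mul_div_mul_sub_le {d d' A B A' B' e C : ℝ} (hA : 0 < A) (hB : 0 < B)
    (hd' : 0 ≤ d') (hd'A : d' ≤ A') (hd'B : d' ≤ B')
    (hd : |d - d'| ≤ e) (hA' : |A' - A| ≤ e) (hB' : |B' - B| ≤ e) (hAC : A ≤ C * A') :
    |2 * d / (A * B) - 2 * d' / (A' * B')| ≤ (4 + 2 * C) * e / (A * B) := by
  have he : 0 ≤ e := (abs_nonneg _).trans hd
  have hC : 0 < C := pos_of_mul_pos_left (hA.trans_le hAC) (hd'.trans hd'A)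
  obtain rfl | hd'pos := hd'.eq_or_lt
  · calc |2 * d / (A * B) - 2 * 0 / (A' * B')| = 2 * |d - 0| / (A * B) := by
          rw [mul_zero, zero_div, sub_zero, sub_zero, abs_div, abs_mul, abs_two,
            abs_of_pos (mul_pos hA hB)]
      _ ≤ 2 * e / (A * B) := by gcongr
      _ ≤ (4 + 2 * C) * e / (A * B) := by gcongr; linarith
  have hA'pos : 0 < A' := hd'pos.trans_le hd'A
  have hB'pos : 0 < B' := hd'pos.trans_le hd'B
  have hsplit : 2 * d / (A * B) - 2 * d' / (A' * B') =
      2 * (d - d') / (A * B) + 2 * (d' / A' * (A' - A)) / (A * B) +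
        2 * (d' / B' * (B' - B)) / (A' * B) := by
    field_simp
    ring
  have hterm {v w : ℝ} (hw : 0 < w) (hv : |v| ≤ e) : |2 * v / w| ≤ 2 * e / w := by
    rw [abs_div, abs_mul, abs_two, abs_of_pos hw]
    gcongr
  have hratio {u v : ℝ} (hu : 0 < u) (hd'u : d' ≤ u) (hv : |v| ≤ e) : |d' / u * v| ≤ e := by
    rw [abs_mul, abs_of_nonneg (div_nonneg hd' hu.le)]
    calc d' / u * |v| ≤ 1 * e := by gcongr; exact (div_le_one hu).2 hd'u
      _ = e := one_mul e
  have hAB : 0 < A * B := mul_pos hA hB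
  rw [hsplit]
  calc _ ≤ |2 * (d - d') / (A * B)| + |2 * (d' / A' * (A' - A)) / (A * B)| +
          |2 * (d' / B' * (B' - B)) / (A' * B)| := abs_add_three _ _ _
    _ ≤ 2 * e / (A * B) + 2 * e / (A * B) + 2 * e / (A' * B) := by
        gcongr
        · exact hterm hAB hd
        · exact hterm hAB (hratio hA'pos hd'A hA')
        · exact hterm (mul_pos hA'pos hB) (hratio hB'pos hd'B hB')
    _ ≤ 2 * e / (A * B) + 2 * e / (A * B) + 2 * C * e / (A * B) := by
        gcongr 2 * e / (A * B) + 2 * e / (A * B) + ?_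
        rw [div_le_div_iff₀ (mul_pos hA'pos hB) hAB]
        nlinarith [mul_le_mul_of_nonneg_left hAC (by positivity : 0 ≤ 2 * e * B)]
    _ = (4 + 2 * C) * e / (A * B) := by ring

theorem stmt0_general (C : ℝ) (hC : 1 ≤ C) (x y z x' : ℂ)
    (hxy : x ≠ y) (hxz : x ≠ z)
    (h1 : C⁻¹ * dist x y ≤ dist x' y) :
    |mengerCurv x y z - mengerCurv x' y z| ≤
      (4 + 2 * C) * dist x x' / (dist x y * dist x z) := by
  set L : Set ℂ := ((affineSpan ℝ ({y, z} : Set ℂ) : AffineSubspace ℝ ℂ) : Set ℂ)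
  have hyL : y ∈ L := subset_affineSpan ℝ _ (by simp)
  have hzL : z ∈ L := subset_affineSpan ℝ _ (by simp)
  have hinfDist : |Metric.infDist x L - Metric.infDist x' L| ≤ dist x x' := by
    simpa [Real.dist_eq] using (Metric.lipschitz_infDist_pt L).dist_le_mul x x'
  have hdist_sub (w : ℂ) : |dist x' w - dist x w| ≤ dist x x' := by
    simpa [dist_comm x'] using abs_dist_sub_le x' x w
  exact abs_two_mul_div_mul_sub_le (dist_pos.2 hxy) (dist_pos.2 hxz) Metric.infDist_nonneg
    (Metric.infDist_le_dist_of_mem hyL) (Metric.infDist_le_dist_of_mem hzL) hinfDist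
    (hdist_sub y) (hdist_sub z) ((inv_mul_le_iff₀ (by positivity)).1 h1)

theorem stmt0 (C : ℝ) (hC : 1 ≤ C) (x y z x' : ℂ)
    (hxy : x ≠ y) (hxz : x ≠ z) (hyz : y ≠ z)
    (h1 : C⁻¹ * dist x y ≤ dist x' y) (h2 : dist x' y ≤ C * dist x y) :
    |mengerCurv x y z - mengerCurv x' y z| ≤
      (4 + 2 * C) * dist x x' / (dist x y * dist x z) :=
  stmt0_general C hC x y z x' hxy hxz h1
end

section
/- Let x, y, z be pairwise distinct points in the plane, let L be a line, and suppose sin∠(L, line(x,y)) ≤ ε₁ and sin∠(L, line(x,z)) ≤ ε₂. Then sin∠(y, x, z) ≤ ε₁ + ε₂, and consequently the Menger curvature satisfies c(x,y,z) = 2 sin∠(y,x,z)/|y−z| ≤ 2(ε₁ + ε₂)/|y−z|. -/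
/-! Flipping the directions `a`, `c` of the two lines (which does not change the sines) makes
both angles with the direction `u` of `L` at most `π/2`. Then the triangle inequality for angles,
`∠(a, c) ≤ ∠(a, u) + ∠(u, c)`, together with `sin (α + γ) ≤ sin α + sin γ` on `[0, π]` and the
monotonicity of `sin` on `[0, π/2]`, gives `sin ∠(a, c) ≤ sin ∠(a, u) + sin ∠(u, c)`. -/

open Real InnerProductGeometry

theorem Real.sin_add_le_sin_add_sin {α γ : ℝ} (hα₀ : 0 ≤ α) (hα : α ≤ π)
    (hγ₀ : 0 ≤ γ) (hγ : γ ≤ π) : sin (α + γ) ≤ sin α + sin γ := by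
  have hsα : 0 ≤ sin α := sin_nonneg_of_nonneg_of_le_pi hα₀ hα
  have hsγ : 0 ≤ sin γ := sin_nonneg_of_nonneg_of_le_pi hγ₀ hγ
  rw [sin_add]
  nlinarith [cos_le_one α, cos_le_one γ]

theorem Real.sin_le_sin_add_sin_of_le_add {φ α β : ℝ} (hφ : 0 ≤ φ) (hφαβ : φ ≤ α + β)
    (hα₀ : 0 ≤ α) (hα : α ≤ π / 2) (hβ₀ : 0 ≤ β) (hβ : β ≤ π / 2) :
    sin φ ≤ sin α + sin β := by
  have hsβ : 0 ≤ sin β := sin_nonneg_of_nonneg_of_le_pi hβ₀ (by linarith)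
  rcases le_total φ α with hφα | hαφ
  · linarith [sin_le_sin_of_le_of_le_pi_div_two (by linarith) hα hφα]
  · calc sin φ = sin (α + (φ - α)) := by ring_nf
      _ ≤ sin α + sin (φ - α) :=
        sin_add_le_sin_add_sin hα₀ (by linarith) (by linarith) (by linarith)
      _ ≤ sin α + sin β := by
        gcongr
        exact sin_le_sin_of_le_of_le_pi_div_two (by linarith) hβ (by linarith)

namespace InnerProductGeometry

variable {V : Type*} [NormedAddCommGroup V] [InnerProductSpace ℝ V]

theorem sin_angle_neg_left (x y : V) : sin (angle (-x) y) = sin (angle x y) := by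
  rw [angle_neg_left, sin_pi_sub]

theorem sin_angle_neg_right (x y : V) : sin (angle x (-y)) = sin (angle x y) := by
  rw [angle_neg_right, sin_pi_sub]

theorem sin_angle_le_sin_angle_add_sin_angle (x y z : V) :
    sin (angle x z) ≤ sin (angle x y) + sin (angle y z) := by
  wlog hxy : angle x y ≤ π / 2 generalizing x
  · simpa only [sin_angle_neg_left] using
      this (-x) (by rw [angle_neg_left]; linarith)
  wlog hyz : angle y z ≤ π / 2 generalizing z
  · simpa only [sin_angle_neg_right] using
      this (-z) (by rw [angle_neg_right]; linarith)
  exact sin_le_sin_add_sin_of_le_add (angle_nonneg x z) (angle_le_angle_add_angle x y z)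
    (angle_nonneg x y) hxy (angle_nonneg y z) hyz

end InnerProductGeometry

/- `sin (angle u v)` is the sine of the angle between the lines spanned by `u` and `v`, since
`sin (π − θ) = sin θ`. -/
theorem stmt13_general (x y z u : ℂ)
    (ε₁ ε₂ : ℝ)
    (h₁ : Real.sin (InnerProductGeometry.angle u (y - x)) ≤ ε₁)
    (h₂ : Real.sin (InnerProductGeometry.angle u (z - x)) ≤ ε₂) :
    Real.sin (EuclideanGeometry.angle y x z) ≤ ε₁ + ε₂ ∧
    2 * Real.sin (EuclideanGeometry.angle y x z) / dist y z ≤ 2 * (ε₁ + ε₂) / dist y z := by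
  have hsin : sin (EuclideanGeometry.angle y x z) ≤ ε₁ + ε₂ :=
    calc sin (angle (y - x) (z - x))
        ≤ sin (angle (y - x) u) + sin (angle u (z - x)) :=
          sin_angle_le_sin_angle_add_sin_angle _ _ _
      _ ≤ ε₁ + ε₂ := by rw [angle_comm (y - x) u]; exact add_le_add h₁ h₂
  exact ⟨hsin, by gcongr⟩

theorem stmt13 (x y z u : ℂ) (hxy : x ≠ y) (hxz : x ≠ z) (hyz : y ≠ z) (hu : u ≠ 0)
    (ε₁ ε₂ : ℝ)
    (h₁ : Real.sin (InnerProductGeometry.angle u (y - x)) ≤ ε₁)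
    (h₂ : Real.sin (InnerProductGeometry.angle u (z - x)) ≤ ε₂) :
    Real.sin (EuclideanGeometry.angle y x z) ≤ ε₁ + ε₂ ∧
    2 * Real.sin (EuclideanGeometry.angle y x z) / dist y z ≤ 2 * (ε₁ + ε₂) / dist y z :=
  stmt13_general x y z u ε₁ ε₂ h₁ h₂
end
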